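/- Let P be a primitive permutation group on a finite set Δ whose socle Soc(P) is non-abelian, and let P_y be the stabilizer of a point y ∈ Δ. Then every prime p for which the cyclic group of order p is a composition factor of P is also such that the cyclic group of order p is a composition factor of P_y; that is, Comp_A(P) ⊆ Comp_A(P_y). -/

import Mathlib

/-!
Let `A` be a non-abelian minimal normal subgroup of `P`. Being a nontrivial normal subgroup of a
primitive group, `A` is transitive, so `P = A P_y`. A cyclic composition factor `C_p` of `P` is
the image of a surjection `f : D → C_p` from a subnormal subgroup `D`. As `C_p` is simple, either
`f` maps `D ∩ A` onto `C_p`, making `C_p` a composition factor of `A`, which is impossible since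
the characteristically simple group `A` is a product of non-abelian simple groups; or `f` kills
`D ∩ A`, and then it factors through `P / A ≅ P_y / (P_y ∩ A)`, so `C_p` is a composition factor
of `P_y`.
-/

open Equiv

/-- `c` is a composition series of the group `G`, running from the trivial subgroup to `G`,
in which each term is normal in the next and there is no intermediate normal subgroup
(equivalently, each successive quotient is simple). -/
def IsCompositionChain {G : Type*} [Group G] {n : ℕ} (c : Fin (n + 1) → Subgroup G) : Prop :=
  c 0 = ⊥ ∧ c (Fin.last n) = ⊤ ∧
    ∀ i : Fin n,
      c i.castSucc < c i.succ ∧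
        ((c i.castSucc).subgroupOf (c i.succ)).Normal ∧
          ∀ K : Subgroup G, c i.castSucc < K → K ≤ c i.succ →
            (K.subgroupOf (c i.succ)).Normal → K = c i.succ

/-- The group `S` occurs as a composition factor of the group `G`: some composition series
of `G` has a step `c i ⊴ c (i+1)` whose quotient is isomorphic to `S` (expressed via a
surjective homomorphism from `c (i+1)` onto `S` with kernel `c i`). -/
def IsCompFactor (S : Type*) [Group S] (G : Type*) [Group G] : Prop :=
  ∃ (n : ℕ) (c : Fin (n + 1) → Subgroup G), IsCompositionChain c ∧
    ∃ (i : Fin n) (f : ↥(c i.succ) →* S),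
      Function.Surjective f ∧ f.ker = (c i.castSucc).subgroupOf (c i.succ)

/-- The cyclic group of (prime) order `p` occurs as a composition factor of `G`. -/
def HasCyclicCompFactor (G : Type*) [Group G] (p : ℕ) : Prop :=
  IsCompFactor (Multiplicative (ZMod p)) G

/-- The number of distinct primes `p` such that the cyclic group of order `p` occurs as a
composition factor of `G`; this is the number of isomorphism types of abelian composition
factors of `G`, i.e. `|Comp_A(G)|`. -/
noncomputable def abelianCompFactorCount (G : Type*) [Group G] : ℕ :=
  {p : ℕ | p.Prime ∧ HasCyclicCompFactor G p}.ncard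

/-- A permutation group `G ≤ Sym(Ω)` is transitive. -/
def IsTransitivePermGroup {Ω : Type*} (G : Subgroup (Equiv.Perm Ω)) : Prop :=
  ∀ a b : Ω, ∃ g ∈ G, g a = b

/-- `B` is a block for the permutation group `G ≤ Sym(Ω)`: every `g ∈ G` maps `B`
either onto itself or onto a set disjoint from `B`. -/
def IsBlockOf {Ω : Type*} (G : Subgroup (Equiv.Perm Ω)) (B : Set Ω) : Prop :=
  ∀ g ∈ G, (g : Equiv.Perm Ω) '' B = B ∨ Disjoint ((g : Equiv.Perm Ω) '' B) B

/-- A permutation group `G ≤ Sym(Ω)` is primitive: it is transitive and all of its blocks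
are trivial (subsingletons or all of `Ω`). -/
def IsPrimitivePermGroup {Ω : Type*} (G : Subgroup (Equiv.Perm Ω)) : Prop :=
  IsTransitivePermGroup G ∧ ∀ B : Set Ω, IsBlockOf G B → B.Subsingleton ∨ B = Set.univ

/-- The restriction homomorphism `H → Sym(Δ)` for a subgroup `H ≤ Sym(Ω)` leaving the
subset `Δ ⊆ Ω` invariant; its image is the permutation group `H^Δ` induced by `H` on `Δ`. -/
def inducedPermHom {Ω : Type*} (H : Subgroup (Equiv.Perm Ω)) (Δ : Set Ω)
    (hinv : ∀ g ∈ H, ∀ a ∈ Δ, g a ∈ Δ) : ↥H →* Equiv.Perm ↥Δ where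
  toFun g := Equiv.Perm.subtypePerm (g : Equiv.Perm Ω)
    (fun a => ⟨fun ha => by
      have h' := hinv _ (H.inv_mem g.2) _ ha
      simpa using h', fun ha => hinv g g.2 a ha⟩)
  map_one' := rfl
  map_mul' g₁ g₂ := rfl

/-- The socle of a group: the subgroup generated by all minimal normal subgroups. -/
def socle (G : Type*) [Group G] : Subgroup G :=
  ⨆ N ∈ {N : Subgroup G | N.Normal ∧ N ≠ ⊥ ∧
    ∀ K : Subgroup G, K.Normal → K ≠ ⊥ → K ≤ N → K = N}, N

section Group

variable {G : Type*} [Group G]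

def IsCompositionStep (A B : Subgroup G) : Prop :=
  A < B ∧ (A.subgroupOf B).Normal ∧
    ∀ K : Subgroup G, A < K → K ≤ B → (K.subgroupOf B).Normal → K = B

variable (G) in
abbrev compositionStepRel : SetRel (Subgroup G) (Subgroup G) :=
  {p | IsCompositionStep p.1 p.2}

def IsSubnormalSection (M G : Type*) [Group M] [Group G] : Prop :=
  ∃ D : Subgroup G, D.IsSubnormal ∧ ∃ f : D →* M, Function.Surjective f

theorem IsCompositionChain.isSubnormal {n : ℕ} {c : Fin (n + 1) → Subgroup G}
    (hc : IsCompositionChain c) (i : Fin (n + 1)) : (c i).IsSubnormal := by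
  induction i using Fin.reverseInduction with
  | last => rw [hc.2.1]; exact .top
  | cast i ih => exact .step _ _ (hc.2.2 i).1.le ih (hc.2.2 i).2.1

theorem IsCompFactor.isSubnormalSection {S : Type*} [Group S] (h : IsCompFactor S G) :
    IsSubnormalSection S G := by
  obtain ⟨n, c, hc, i, f, hf, -⟩ := h
  exact ⟨c i.succ, hc.isSubnormal i.succ, f, hf⟩

theorem exists_relSeries_isCompositionStep [Finite G] {K H : Subgroup G} (hKH : K ≤ H)
    (hK : (K.subgroupOf H).Normal) :
    ∃ s : RelSeries (compositionStepRel G), s.head = K ∧ s.last = H := by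
  induction H using WellFoundedLT.induction with
  | ind H ih =>
    obtain rfl | hlt := hKH.eq_or_lt
    · exact ⟨RelSeries.singleton _ K, rfl, rfl⟩
    obtain ⟨M, ⟨hKM, hMH, hMn⟩, hMmax⟩ := exists_maximal_of_wellFoundedGT
      (fun L : Subgroup G => K ≤ L ∧ L < H ∧ (L.subgroupOf H).Normal) ⟨K, le_rfl, hlt, hK⟩
    have hstep : IsCompositionStep M H := by
      refine ⟨hMH, hMn, fun L hML hLH hLn => ?_⟩
      by_contra hne
      exact hML.not_ge (hMmax ⟨hKM.trans hML.le, hLH.lt_of_ne hne, hLn⟩ hML.le)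
    have hKM' : (K.subgroupOf M).Normal := by
      rw [Subgroup.normal_subgroupOf_iff_le_normalizer hKM]
      exact hMH.le.trans ((Subgroup.normal_subgroupOf_iff_le_normalizer hKH).1 hK)
    obtain ⟨s, hs, hs'⟩ := ih M hMH hKM hKM'
    exact ⟨s.snoc H (hs' ▸ hstep), by simp [hs], by simp⟩

theorem Subgroup.IsSubnormal.exists_relSeries [Finite G] {H : Subgroup G} (hH : H.IsSubnormal) :
    ∃ s : RelSeries (compositionStepRel G), s.head = H ∧ s.last = ⊤ := by
  induction hH with
  | top => exact ⟨RelSeries.singleton _ ⊤, rfl, rfl⟩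
  | step H K hHK _ hN ih =>
    obtain ⟨s, hs, hs'⟩ := ih
    obtain ⟨t, ht, ht'⟩ := exists_relSeries_isCompositionStep hHK hN
    exact ⟨t.smash s (ht'.trans hs.symm), by simp [ht], by simp [hs']⟩

theorem isCompositionStep_map_ker {S : Type*} [Group S] [IsSimpleGroup S] {D : Subgroup G}
    {f : D →* S} (hf : Function.Surjective f) : IsCompositionStep (f.ker.map D.subtype) D := by
  have hker : (f.ker.map D.subtype).subgroupOf D = f.ker :=
    Subgroup.comap_map_eq_self_of_injective D.subtype_injective _
  refine ⟨(Subgroup.map_subtype_le _).lt_of_ne fun h => ?_, by rw [hker]; exact f.normal_ker,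
    fun L hKL hLD hLn => ?_⟩
  · obtain ⟨s, hs⟩ := exists_ne (1 : S)
    obtain ⟨d, rfl⟩ := hf s
    refine hs (f.mem_ker.1 ?_)
    rw [← hker, h, Subgroup.subgroupOf_self]
    trivial
  have hkerL : f.ker ≤ L.subgroupOf D := hker ▸ Subgroup.subgroupOf_mono D hKL.le
  rcases (hLn.map f hf).eq_bot_or_eq_top with h | h
  · rw [Subgroup.map_eq_bot_iff] at h
    refine absurd ?_ hKL.not_ge
    rw [← Subgroup.map_subgroupOf_eq_of_le hLD]
    exact Subgroup.map_mono h
  · refine hLD.antisymm (Subgroup.subgroupOf_eq_top.1 ?_)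
    rw [← Subgroup.comap_map_eq_self hkerL, h, Subgroup.comap_top]

theorem isCompFactor_of_relSeries {S : Type*} [Group S] (s : RelSeries (compositionStepRel G))
    (hhead : s.head = ⊥) (hlast : s.last = ⊤) (i : Fin s.length) {K D : Subgroup G}
    (hK : s i.castSucc = K) (hD : s i.succ = D) {f : D →* S} (hf : Function.Surjective f)
    (hker : f.ker = K.subgroupOf D) : IsCompFactor S G := by
  subst hK hD
  exact ⟨s.length, s, ⟨hhead, hlast, s.step⟩, i, f, hf, hker⟩

theorem IsSubnormalSection.isCompFactor [Finite G] {S : Type*} [Group S] [IsSimpleGroup S]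
    (h : IsSubnormalSection S G) : IsCompFactor S G := by
  obtain ⟨D, hD, f, hf⟩ := h
  -- Refine `⊥ ⊴ ker f ⊴ D ⊴ ⋯ ⊴ G`; the step `ker f ⊴ D` sits at index `s₁.length`.
  obtain ⟨s₁, hs₁, hs₁'⟩ := exists_relSeries_isCompositionStep (K := ⊥)
    (H := f.ker.map D.subtype) bot_le (by rw [Subgroup.bot_subgroupOf]; exact Subgroup.normal_bot)
  obtain ⟨s₂, hs₂, hs₂'⟩ := hD.exists_relSeries
  let s₃ := s₁.snoc D (hs₁' ▸ isCompositionStep_map_ker hf)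
  have hs₃ : s₃.last = s₂.head := by simp [s₃, hs₂]
  refine isCompFactor_of_relSeries (s₃.smash s₂ hs₃) (by simp [s₃, hs₁])
    (by simp [hs₂']) ((Fin.last s₁.length : Fin s₃.length).castAdd s₂.length) ?_ ?_ hf
    (Subgroup.comap_map_eq_self_of_injective D.subtype_injective _).symm
  · exact (RelSeries.smash_castAdd hs₃ (Fin.last _)).trans
      ((RelSeries.snoc_castSucc _ _ _ _).trans hs₁')
  · exact (RelSeries.smash_succ_castAdd hs₃ (Fin.last _)).trans (RelSeries.last_snoc _ _ _)

namespace IsSubnormalSection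

variable {M Q : Type*} [Group M] [Group Q]

theorem of_surjective {φ : G →* Q} (hφ : Function.Surjective φ) (h : IsSubnormalSection M Q) :
    IsSubnormalSection M G := by
  obtain ⟨D, hD, f, hf⟩ := h
  exact ⟨D.comap φ, hD.comap φ, f.comp (φ.subgroupComap D),
    hf.comp (φ.subgroupComap_surjective_of_surjective D hφ)⟩

theorem of_mulEquiv (e : G ≃* Q) (h : IsSubnormalSection M Q) : IsSubnormalSection M G :=
  h.of_surjective (φ := e.toMonoidHom) e.surjective

theorem of_forall_eq_one {φ : G →* Q} (hφ : Function.Surjective φ) {D : Subgroup G}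
    (hD : D.IsSubnormal) {f : D →* M} (hf : Function.Surjective f)
    (hker : ∀ x : D, φ x = 1 → f x = 1) : IsSubnormalSection M Q := by
  have hψ := φ.subgroupMap_surjective D
  let g := (φ.subgroupMap D).liftOfRightInverse _ (Function.rightInverse_surjInv hψ)
    ⟨f, fun x hx => hker x (congrArg Subtype.val hx)⟩
  refine ⟨D.map φ, hD.map hφ, g, fun m => ?_⟩
  obtain ⟨x, rfl⟩ := hf m
  exact ⟨_, MonoidHom.liftOfRightInverse_comp_apply _ _ _ _ x⟩

theorem of_sup_eq_top [IsSimpleGroup M] {N H : Subgroup G} [N.Normal] (hNH : N ⊔ H = ⊤)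
    (h : IsSubnormalSection M G) : IsSubnormalSection M N ∨ IsSubnormalSection M H := by
  obtain ⟨D, hD, f, hf⟩ := h
  rcases ((‹N.Normal›.subgroupOf D).map f hf).eq_bot_or_eq_top with hbot | htop
  · -- `f` kills `D ⊓ N`, so it factors through `G ⧸ N`, onto which `H` maps.
    right
    have hHN : Function.Surjective ((QuotientGroup.mk' N).comp H.subtype) := by
      rw [← MonoidHom.range_eq_top, MonoidHom.range_comp, Subgroup.range_subtype]
      apply Subgroup.comap_injective (QuotientGroup.mk'_surjective N)
      rw [QuotientGroup.comap_map_mk', hNH, Subgroup.comap_top]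
    rw [Subgroup.map_eq_bot_iff] at hbot
    exact (of_forall_eq_one (QuotientGroup.mk'_surjective N) hD hf fun x hx =>
      hbot ((QuotientGroup.eq_one_iff (x : G)).1 hx)).of_surjective hHN
  · left
    refine ⟨D.subgroupOf N, hD.subgroupOf, f.comp (N.subtype.subgroupComap D), fun m => ?_⟩
    obtain ⟨x, hx, rfl⟩ : m ∈ (N.subgroupOf D).map f := htop ▸ Subgroup.mem_top m
    exact ⟨⟨⟨x, hx⟩, x.2⟩, rfl⟩

end IsSubnormalSection

theorem IsSimpleGroup.not_isSubnormalSection {S M : Type*} [Group S] [IsSimpleGroup S]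
    [CommGroup M] [Nontrivial M] (hS : ¬IsMulCommutative S) : ¬IsSubnormalSection M S := by
  rintro ⟨D, hD, f, hf⟩
  obtain ⟨m, hm⟩ := exists_ne (1 : M)
  rcases hD.eq_bot_or_top_of_isSimpleGroup ‹_› with rfl | rfl
  · exact not_nontrivial _ hf.nontrivial
  · let g := f.comp Subgroup.topEquiv.symm.toMonoidHom
    have hg : Function.Surjective g := hf.comp Subgroup.topEquiv.symm.surjective
    rcases g.normal_ker.eq_bot_or_eq_top with hker | hker
    · exact hS ⟨⟨fun a b => (g.ker_eq_bot_iff.1 hker) (by simp only [map_mul, mul_comm])⟩⟩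
    · obtain ⟨x, hx⟩ := hg m
      exact hm (hx ▸ (g.mem_ker.1 (hker ▸ Subgroup.mem_top x)))

theorem not_isSubnormalSection_sSup {M : Type*} [Group M] [IsSimpleGroup M]
    {𝒮 : Set (Subgroup G)} (h𝒮 : 𝒮.Finite) (hn : ∀ S ∈ 𝒮, S.Normal)
    (hS : ∀ S ∈ 𝒮, ¬IsSubnormalSection M S) : ¬IsSubnormalSection M ↥(sSup 𝒮) := by
  induction 𝒮, h𝒮 using Set.Finite.induction_on with
  | empty =>
    rw [sSup_empty]
    rintro ⟨D, -, f, hf⟩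
    exact not_nontrivial _ hf.nontrivial
  | @insert S 𝒮 _ _ ih =>
    rw [sSup_insert]
    intro h
    set J := S ⊔ sSup 𝒮
    have : (S.subgroupOf J).Normal := (hn S (Set.mem_insert _ _)).subgroupOf _
    rcases h.of_sup_eq_top (N := S.subgroupOf J) (H := (sSup 𝒮).subgroupOf J)
      (by rw [← Subgroup.subgroupOf_sup le_sup_left le_sup_right, Subgroup.subgroupOf_self])
      with h' | h'
    · exact hS S (Set.mem_insert _ _)
        (h'.of_mulEquiv (Subgroup.subgroupOfEquivOfLe le_sup_left).symm)
    · exact ih (fun T hT => hn T (Set.mem_insert_of_mem _ hT))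
        (fun T hT => hS T (Set.mem_insert_of_mem _ hT))
        (h'.of_mulEquiv (Subgroup.subgroupOfEquivOfLe le_sup_right).symm)

theorem Function.Surjective.isMulCommutative {M N F : Type*} [Mul M] [Mul N] [FunLike F M N]
    [MulHomClass F M N] [IsMulCommutative M] {f : F} (hf : Function.Surjective f) :
    IsMulCommutative N := by
  refine ⟨⟨fun a b => ?_⟩⟩
  obtain ⟨x, rfl⟩ := hf a
  obtain ⟨y, rfl⟩ := hf b
  rw [← map_mul, ← map_mul, mul_comm' x y]

def IsMinimalNormal (A : Subgroup G) : Prop :=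
  A.Normal ∧ A ≠ ⊥ ∧ ∀ K : Subgroup G, K.Normal → K ≠ ⊥ → K ≤ A → K = A

variable (G) in
def IsCharacteristicallySimple : Prop :=
  ∀ K : Subgroup G, K.Characteristic → K = ⊥ ∨ K = ⊤

theorem socle_eq_sSup : socle G = sSup {A | IsMinimalNormal A} :=
  sSup_eq_iSup.symm

theorem exists_isMinimalNormal [Finite G] [Nontrivial G] :
    ∃ A : Subgroup G, IsMinimalNormal A := by
  obtain ⟨A, ⟨hA, hAbot⟩, hmin⟩ := exists_minimal_of_wellFoundedLT
    (fun K : Subgroup G => K.Normal ∧ K ≠ ⊥) ⟨⊤, inferInstance, top_ne_bot⟩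
  exact ⟨A, hA, hAbot, fun K hK hKbot hKA => hKA.antisymm (hmin ⟨hK, hKbot⟩ hKA)⟩

namespace IsMinimalNormal

theorem map_mulEquiv {G' : Type*} [Group G'] {A : Subgroup G} (hA : IsMinimalNormal A)
    (φ : G ≃* G') : IsMinimalNormal (A.map φ.toMonoidHom) := by
  refine ⟨hA.1.map _ φ.surjective, fun h => hA.2.1 ?_, fun K hK hKbot hKA => ?_⟩
  · exact (Subgroup.map_eq_bot_iff_of_injective _ φ.injective).1 h
  have hK' : K = (K.comap φ.toMonoidHom).map φ.toMonoidHom :=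
    (Subgroup.map_comap_eq_self_of_surjective φ.surjective K).symm
  rw [hK', hA.2.2 _ (hK.comap _) (fun h => hKbot (by rw [hK', h, Subgroup.map_bot])) ?_]
  rw [← Subgroup.comap_map_eq_self_of_injective (f := φ.toMonoidHom) φ.injective A]
  exact Subgroup.comap_mono hKA

theorem commute_of_ne {X Y : Subgroup G} (hX : IsMinimalNormal X) (hY : IsMinimalNormal Y)
    (hne : X ≠ Y) {x y : G} (hx : x ∈ X) (hy : y ∈ Y) : Commute x y := by
  have := hX.1
  have := hY.1
  refine Subgroup.commute_of_normal_of_disjoint X Y hX.1 hY.1 (disjoint_iff.2 ?_) x y hx hy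
  by_contra h
  exact hne ((hX.2.2 _ inferInstance h inf_le_left).symm.trans
    (hY.2.2 _ inferInstance h inf_le_right))

theorem isCharacteristicallySimple {A : Subgroup G} (hA : IsMinimalNormal A) :
    IsCharacteristicallySimple A := by
  intro K _
  have := hA.1
  refine or_iff_not_imp_left.2 fun hK => Subgroup.map_injective A.subtype_injective ?_
  rw [← MonoidHom.range_eq_map, Subgroup.range_subtype]
  exact hA.2.2 _ inferInstance
    ((Subgroup.map_eq_bot_iff_of_injective _ A.subtype_injective).not.2 hK)
    (Subgroup.map_subtype_le K)

theorem isSimpleGroup {𝒮 : Set (Subgroup G)} (h𝒮 : ∀ S ∈ 𝒮, IsMinimalNormal S)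
    (htop : sSup 𝒮 = ⊤) {T : Subgroup G} (hT : T ∈ 𝒮) : IsSimpleGroup T := by
  have hTmin := h𝒮 T hT
  have := (Subgroup.nontrivial_iff_ne_bot T).2 hTmin.2.1
  refine ⟨fun R hR => or_iff_not_imp_left.2 fun hRbot => ?_⟩
  have hRT : (R.map T.subtype).subgroupOf T = R :=
    Subgroup.comap_map_eq_self_of_injective T.subtype_injective R
  have hRn : (R.map T.subtype).Normal := by
    rw [← Subgroup.normalizer_eq_top_iff, eq_top_iff, ← htop]
    refine sSup_le fun S hS => ?_
    obtain rfl | hne := eq_or_ne S T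
    · rw [← Subgroup.normal_subgroupOf_iff_le_normalizer (Subgroup.map_subtype_le R), hRT]
      exact hR
    · refine le_trans (fun s hs => ?_) (Subgroup.centralizer_le_normalizer _)
      exact Subgroup.mem_centralizer_iff.2 fun r hr =>
        ((h𝒮 S hS).commute_of_ne hTmin hne hs (Subgroup.map_subtype_le R hr)).symm
  have hRbot' : R.map T.subtype ≠ ⊥ :=
    (Subgroup.map_eq_bot_iff_of_injective _ T.subtype_injective).not.2 hRbot
  rw [← hRT, hTmin.2.2 _ hRn hRbot' (Subgroup.map_subtype_le R), Subgroup.subgroupOf_self]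

end IsMinimalNormal

theorem exists_isMinimalNormal_not_isMulCommutative (h : ¬IsMulCommutative (socle G)) :
    ∃ A : Subgroup G, IsMinimalNormal A ∧ ¬IsMulCommutative A := by
  by_contra! hcomm
  refine h (Subgroup.le_centralizer_iff_isMulCommutative.1 (iSup₂_le fun A hA => ?_))
  rw [Subgroup.le_centralizer_iff]
  refine iSup₂_le fun B hB => ?_
  obtain rfl | hne := eq_or_ne B A
  · exact Subgroup.le_centralizer_iff_isMulCommutative.2 (hcomm B hB)
  · exact fun b hb => Subgroup.mem_centralizer_iff.2 fun a ha =>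
      (IsMinimalNormal.commute_of_ne hA hB hne.symm ha hb)

namespace IsCharacteristicallySimple

theorem sSup_eq_top (hG : IsCharacteristicallySimple G) {𝒮 : Set (Subgroup G)}
    (h𝒮 : ∀ φ : G ≃* G, ∀ K ∈ 𝒮, K.map φ.toMonoidHom ∈ 𝒮) {K : Subgroup G}
    (hK : K ∈ 𝒮) (hKbot : K ≠ ⊥) : sSup 𝒮 = ⊤ := by
  refine (hG _ (Subgroup.characteristic_iff_map_le.2 fun φ => ?_)).resolve_left
    fun h => hKbot (le_bot_iff.1 (h ▸ le_sSup hK))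
  rw [Subgroup.map_le_iff_le_comap]
  exact sSup_le fun L hL => Subgroup.map_le_iff_le_comap.1 (le_sSup (h𝒮 φ L hL))

theorem not_isSubnormalSection [Finite G] (hG : IsCharacteristicallySimple G)
    (hnc : ¬IsMulCommutative G) {M : Type*} [CommGroup M] [IsSimpleGroup M] :
    ¬IsSubnormalSection M G := by
  have : Nontrivial G := not_subsingleton_iff_nontrivial.1 fun _ =>
    hnc ⟨⟨fun _ _ => Subsingleton.elim _ _⟩⟩
  obtain ⟨A, hA⟩ := exists_isMinimalNormal (G := G)
  have hsoc : socle G = ⊤ := by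
    rw [socle_eq_sSup]
    exact hG.sSup_eq_top (fun φ K hK => hK.map_mulEquiv φ) hA hA.2.1
  have hsocnc : ¬IsMulCommutative (socle G) := fun h =>
    hnc (Function.Surjective.isMulCommutative (f := (socle G).subtype)
      fun g => ⟨⟨g, hsoc ▸ Subgroup.mem_top g⟩, rfl⟩)
  obtain ⟨T, hT, hTnc⟩ := exists_isMinimalNormal_not_isMulCommutative hsocnc
  -- `G` is generated by its non-abelian minimal normal subgroups, and each of them is simple.
  set 𝒮 := {S : Subgroup G | IsMinimalNormal S ∧ ¬IsMulCommutative S}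
  have h𝒮 : sSup 𝒮 = ⊤ := by
    refine hG.sSup_eq_top (fun φ S hS => ⟨hS.1.map_mulEquiv φ, ?_⟩) ⟨hT, hTnc⟩ hT.2.1
    intro h
    exact hS.2 (S.equivMapOfInjective φ.toMonoidHom φ.injective).symm.surjective.isMulCommutative
  have h := not_isSubnormalSection_sSup (M := M) (Set.toFinite 𝒮) (fun S hS => hS.1.1)
    fun S hS =>
      (IsMinimalNormal.isSimpleGroup (fun S hS => hS.1) h𝒮 hS).not_isSubnormalSection hS.2
  rw [h𝒮] at h
  exact fun hsec => h (hsec.of_mulEquiv Subgroup.topEquiv)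

end IsCharacteristicallySimple

end Group

theorem Subgroup.inf_stabilizer_subgroupOf {G α : Type*} [Group G] [MulAction G α]
    (P : Subgroup G) (y : α) :
    (P ⊓ MulAction.stabilizer G y).subgroupOf P = MulAction.stabilizer P y := by
  ext g
  simp [Subgroup.mem_subgroupOf, Subgroup.smul_def]

namespace IsPrimitivePermGroup

variable {Δ : Type*} {P : Subgroup (Equiv.Perm Δ)}

theorem isPreprimitive (hP : IsPrimitivePermGroup P) : MulAction.IsPreprimitive P Δ where
  exists_smul_eq a b := by
    obtain ⟨g, hg, hgab⟩ := hP.1 a b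
    exact ⟨⟨g, hg⟩, hgab⟩
  isTrivialBlock_of_isBlock {B} hB :=
    hP.2 B fun g hg => MulAction.isBlock_iff_smul_eq_or_disjoint.1 hB ⟨g, hg⟩

theorem sup_stabilizer_eq_top (hP : IsPrimitivePermGroup P) {A : Subgroup P} [A.Normal]
    (hA : A ≠ ⊥) (y : Δ) : A ⊔ MulAction.stabilizer P y = ⊤ := by
  have := hP.isPreprimitive
  have : MulAction.IsPretransitive A Δ := by
    refine MulAction.IsQuasiPreprimitive.isPretransitive_of_normal fun h => hA ?_
    refine (Subgroup.eq_bot_iff_forall A).2 fun a ha => Subtype.ext (Equiv.ext fun x => ?_)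
    exact (h ▸ Set.mem_univ x : x ∈ MulAction.fixedPoints A Δ) ⟨a, ha⟩
  refine eq_top_iff.2 fun g _ => ?_
  obtain ⟨a, ha⟩ := MulAction.exists_smul_eq A y (g • y)
  rw [← mul_inv_cancel_left (a : P) g]
  refine Subgroup.mul_mem_sup a.2 ?_
  rw [MulAction.mem_stabilizer_iff, mul_smul, ← ha]
  exact inv_smul_smul (a : P) y

end IsPrimitivePermGroup

/-- Let `P` be a primitive permutation group on a finite set `Δ` whose
socle is non-abelian and let `P_y` be a point stabiliser. Then every abelian composition
factor of `P` is a composition factor of `P_y`, i.e. `Comp_A(P) ⊆ Comp_A(P_y)`. -/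
theorem compA_subset_of_nonabelian_socle {Δ : Type} [Fintype Δ]
    (P : Subgroup (Equiv.Perm Δ)) (hprim : IsPrimitivePermGroup P)
    (hsocle : ¬ IsMulCommutative ↥(socle ↥P)) (y : Δ) :
    ∀ p : ℕ, p.Prime → HasCyclicCompFactor ↥P p →
      HasCyclicCompFactor ↥(P ⊓ MulAction.stabilizer (Equiv.Perm Δ) y) p := by
  intro p hp hfac
  have := Fact.mk hp
  have : IsSimpleGroup (Multiplicative (ZMod p)) :=
    isSimpleGroup_of_prime_card (by rw [Nat.card_congr Multiplicative.toAdd, Nat.card_zmod])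
  obtain ⟨A, hA, hAnc⟩ := exists_isMinimalNormal_not_isMulCommutative hsocle
  have := hA.1
  rcases hfac.isSubnormalSection.of_sup_eq_top (hprim.sup_stabilizer_eq_top hA.2.1 y) with hA' | hy
  · exact absurd hA' (hA.isCharacteristicallySimple.not_isSubnormalSection hAnc)
  · refine (hy.of_mulEquiv ?_).isCompFactor
    exact (Subgroup.subgroupOfEquivOfLe inf_le_left).symm.trans
      (MulEquiv.subgroupCongr (Subgroup.inf_stabilizer_subgroupOf P y))
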